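/- Suppose (b^k)_{k≥0}, (a^k)_{k≥0}, (f^k)_{k≥0} are sequences of natural numbers with b^0 = 0, such that for all k: 2 b^{k+1} = 2 b^k + f^k − a^k (as integers), a^{k+1} ≤ b^{k+1}, and f^k ≤ b^{k+1}. Then b^k = 0, a^k = 0, and f^k = 0 for all k. -/
import Mathlib

/-- the arithmetic induction at the heart of the quantitative
characterization of the `∂∂̄`-Lemma. If `(b k)`, `(a k)`, `(f k)` are sequences of natural
numbers with `b 0 = 0`, satisfying `2 b(k+1) = 2 b(k) + f(k) − a(k)` (as integers),
`a (k+1) ≤ b (k+1)` and `f k ≤ b (k+1)` for all `k`, then all three sequences vanish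
identically. -/
theorem arithmetic_induction (a b f : ℕ → ℕ) (hb0 : b 0 = 0)
    (hrec : ∀ k : ℕ, 2 * (b (k + 1) : ℤ) = 2 * (b k : ℤ) + (f k : ℤ) - (a k : ℤ))
    (hab : ∀ k : ℕ, a (k + 1) ≤ b (k + 1)) (hfb : ∀ k : ℕ, f k ≤ b (k + 1)) :
    ∀ k : ℕ, b k = 0 ∧ a k = 0 ∧ f k = 0 := by
  have key : ∀ k : ℕ, b k = 0 ∧ a k = 0 := by
    intro k
    induction k with
    | zero =>
      have h := hrec 0
      have h2 := hfb 0
      omega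
    | succ n ih =>
      have h := hrec n
      have h2 := hfb n
      have h3 := hab n
      omega
  intro k
  obtain ⟨hb, ha⟩ := key k
  have h2 := hfb k
  have h3 := (key (k + 1)).1
  omega
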